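/- Let T be a bounded linear operator on a complex Banach space X, and suppose that for every nonempty relatively open subset U of the spectrum σ(T), the glocal spectral subspace 𝒳_T(closure(U)) is dense in X. Then for the adjoint operator T* on the dual space X*, the glocal spectral subspace 𝒳*_{T*}(F) equals {0} for every closed set F that is a proper subset of σ(T*). -/

import Mathlib

open Set Filter Topology Bornology Complex

noncomputable section




variable {X : Type*} [NormedAddCommGroup X] [NormedSpace ℂ X]

/-- The glocal spectral subspace `𝒳_T(F)` of a bounded operator `T`. -/
def glocalSubspace (T : X →L[ℂ] X) (F : Set ℂ) : Set X :=
  {x | ∃ f : ℂ → X, AnalyticOnNhd ℂ f Fᶜ ∧ ∀ z ∈ Fᶜ, T (f z) - z • f z = x}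

/-- The local resolvent set `ρ_T(x)`. -/
def localResolventSet (T : X →L[ℂ] X) (x : X) : Set ℂ :=
  ⋃₀ {U : Set ℂ | IsOpen U ∧ ∃ f : ℂ → X, AnalyticOnNhd ℂ f U ∧ ∀ z ∈ U, T (f z) - z • f z = x}

/-- The local spectrum `σ_T(x)`. -/
def localSpectrum (T : X →L[ℂ] X) (x : X) : Set ℂ := (localResolventSet T x)ᶜ

/-- The local spectral subspace `X_T(F)`. -/
def localSubspace (T : X →L[ℂ] X) (F : Set ℂ) : Set X := {x | localSpectrum T x ⊆ F}

/-- Dunford's property (C). -/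
def HasPropertyC (T : X →L[ℂ] X) : Prop :=
  ∀ F : Set ℂ, IsClosed F → IsClosed (localSubspace T F)

/-- The single-valued extension property. -/
def HasSVEP (T : X →L[ℂ] X) : Prop :=
  ∀ U : Set ℂ, IsOpen U → ∀ f : ℂ → X, AnalyticOnNhd ℂ f U →
    (∀ z ∈ U, T (f z) - z • f z = 0) → ∀ z ∈ U, f z = 0

/-- The point spectrum of an operator. -/
def pointSpectrum (T : X →L[ℂ] X) : Set ℂ := {μ : ℂ | ∃ x : X, x ≠ 0 ∧ T x = μ • x}

/-- The local spectral radius `r_T(x) = limsup_n ‖Tⁿx‖^(1/n)`. -/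
def localSpectralRadius (T : X →L[ℂ] X) (x : X) : ℝ :=
  Filter.limsup (fun n : ℕ => ‖(T ^ n) x‖ ^ (1 / (n : ℝ))) Filter.atTop

/-- The adjoint operator `T*` acting on the dual space `X*`. -/
def dualOp (T : X →L[ℂ] X) : StrongDual ℂ X →L[ℂ] StrongDual ℂ X :=
  (ContinuousLinearMap.compL ℂ X X ℂ).flip T

/-- Restriction of an operator to an invariant subspace. -/
def restrictOp (T : X →L[ℂ] X) (M : Submodule ℂ X) (h : ∀ x ∈ M, T x ∈ M) : M →L[ℂ] M :=
  (T.comp M.subtypeL).codRestrict M (fun x => h x.1 x.2)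

/-- The full spectrum `η(K)`: the union of `K` with all the bounded connected
components of its complement. -/
def fullSpectrum (K : Set ℂ) : Set ℂ :=
  K ∪ {z : ℂ | z ∉ K ∧ Bornology.IsBounded (connectedComponentIn Kᶜ z)}

/-- `U` is a nonempty relatively open subset of `σ(T)`. -/
def RelativelyOpenInSpectrum (T : X →L[ℂ] X) (U : Set ℂ) : Prop :=
  U.Nonempty ∧ ∃ V : Set ℂ, IsOpen V ∧ U = spectrum ℂ T ∩ V

/-!
Pick `λ ∈ σ(T*) ∖ F`; since `σ(T*) ⊆ σ(T)`, we may let `G` be the closure of a small relative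
neighbourhood of `λ` in `σ(T)`, so that `G` is compact and disjoint from `F`. If
`(T* - z) g(z) = φ` off `F` and `(T - z) f(z) = x` off `G`, then `⟨g(z), x⟩ = ⟨φ, f(z)⟩` off
`F ∪ G`, so the two functions glue to an entire function. It vanishes at infinity because `f(z) = O(1/|z|)`, hence is zero by
Liouville. Thus `g(λ)` annihilates the dense subspace `𝒳_T(G)`, so `g(λ) = 0` and
`φ = (T* - λ) g(λ) = 0`.
-/

lemma dualOp_apply (T : X →L[ℂ] X) (φ : StrongDual ℂ X) (x : X) :
    dualOp T φ x = φ (T x) := rfl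

lemma dualOp_mul (A B : X →L[ℂ] X) : dualOp A * dualOp B = dualOp (B * A) := rfl

lemma dualOp_one : dualOp (1 : X →L[ℂ] X) = 1 := rfl

set_option synthInstance.maxHeartbeats 200000 in
lemma dualOp_smul_one_sub (T : X →L[ℂ] X) (z : ℂ) : dualOp (z • 1 - T) = z • 1 - dualOp T := by
  ext φ x
  simp [dualOp_apply]

lemma spectrum_dualOp_subset (T : X →L[ℂ] X) : spectrum ℂ (dualOp T) ⊆ spectrum ℂ T := by
  intro z hz ⟨u, hu⟩
  refine hz ⟨⟨dualOp u.val, dualOp u.inv, ?_, ?_⟩, ?_⟩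
  · rw [dualOp_mul, u.inv_val, dualOp_one]
  · rw [dualOp_mul, u.val_inv, dualOp_one]
  · rw [Algebra.algebraMap_eq_smul_one] at hu ⊢
    exact (congrArg dualOp hu).trans (dualOp_smul_one_sub T z)

lemma dualOp_sub_smul_apply (T : X →L[ℂ] X) (ψ : StrongDual ℂ X) (z : ℂ) (y : X) :
    (dualOp T ψ - z • ψ) y = ψ (T y - z • y) := by
  simp [dualOp_apply]

section Resolvent

variable {𝕜 E : Type*} [NontriviallyNormedField 𝕜] [NormedAddCommGroup E] [NormedSpace 𝕜 E]

lemma norm_le_of_apply_sub_smul_eq (T : E →L[𝕜] E) {z : 𝕜} {x y : E} (hz : ‖T‖ < ‖z‖)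
    (hy : T y - z • y = x) : ‖y‖ ≤ ‖x‖ / (‖z‖ - ‖T‖) := by
  rw [le_div_iff₀ (sub_pos.mpr hz)]
  have : ‖z‖ * ‖y‖ ≤ ‖T‖ * ‖y‖ + ‖x‖ :=
    calc ‖z‖ * ‖y‖ = ‖T y - x‖ := by rw [← hy, sub_sub_cancel, norm_smul]
      _ ≤ ‖T y‖ + ‖x‖ := norm_sub_le _ _
      _ ≤ ‖T‖ * ‖y‖ + ‖x‖ := by gcongr; exact T.le_opNorm y
  linarith

lemma tendsto_zero_of_apply_sub_smul_eq [ProperSpace 𝕜] (T : E →L[𝕜] E) {x : E} {f : 𝕜 → E}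
    (hf : ∀ᶠ z in cocompact 𝕜, T (f z) - z • f z = x) : Tendsto f (cocompact 𝕜) (𝓝 0) := by
  have hnorm : Tendsto (fun z : 𝕜 => ‖z‖ - ‖T‖) (cocompact 𝕜) atTop :=
    tendsto_atTop_add_const_right _ _ tendsto_norm_cocompact_atTop
  refine squeeze_zero_norm' ?_ (hnorm.const_div_atTop ‖x‖)
  filter_upwards [hf, tendsto_norm_cocompact_atTop.eventually_gt_atTop ‖T‖] with z hfz hz
  exact norm_le_of_apply_sub_smul_eq T hz hfz

end Resolvent

lemma exists_differentiable_eqOn_of_eqOn_inter {𝕜 E F : Type*} [NontriviallyNormedField 𝕜]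
    [NormedAddCommGroup E] [NormedSpace 𝕜 E] [NormedAddCommGroup F] [NormedSpace 𝕜 F]
    {U₁ U₂ : Set E} {f₁ f₂ : E → F} (hU₁ : IsOpen U₁) (hU₂ : IsOpen U₂)
    (hcover : U₁ ∪ U₂ = univ) (hf₁ : DifferentiableOn 𝕜 f₁ U₁) (hf₂ : DifferentiableOn 𝕜 f₂ U₂)
    (heq : EqOn f₁ f₂ (U₁ ∩ U₂)) :
    ∃ h : E → F, Differentiable 𝕜 h ∧ EqOn h f₁ U₁ ∧ EqOn h f₂ U₂ := by
  classical
  have h₁ : EqOn (U₁.piecewise f₁ f₂) f₁ U₁ := piecewise_eqOn _ _ _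
  have h₂ : EqOn (U₁.piecewise f₁ f₂) f₂ U₂ :=
    (eqOn_piecewise _).mpr ⟨fun w hw => heq ⟨hw.2, hw.1⟩, fun _ _ => rfl⟩
  refine ⟨U₁.piecewise f₁ f₂, fun z => ?_, h₁, h₂⟩
  rcases (hcover.symm ▸ mem_univ z : z ∈ U₁ ∪ U₂) with hz | hz
  · exact (hf₁.congr h₁).differentiableAt (hU₁.mem_nhds hz)
  · exact (hf₂.congr h₂).differentiableAt (hU₂.mem_nhds hz)

lemma apply_eq_zero_of_mem_glocalSubspace {T : X →L[ℂ] X} {F G : Set ℂ} (hF : IsClosed F)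
    (hG : IsCompact G) (hGF : G ⊆ Fᶜ) {φ : StrongDual ℂ X} {g : ℂ → StrongDual ℂ X}
    (hg : AnalyticOnNhd ℂ g Fᶜ) (hgφ : ∀ z ∈ Fᶜ, dualOp T (g z) - z • g z = φ) {x : X}
    (hx : x ∈ glocalSubspace T G) {z : ℂ} (hz : z ∈ Fᶜ) : g z x = 0 := by
  obtain ⟨f, hf, hfx⟩ := hx
  obtain ⟨h, hh, hhF, hhG⟩ := exists_differentiable_eqOn_of_eqOn_inter (f₁ := fun z => g z x)
    (f₂ := fun z => φ (f z)) hF.isOpen_compl hG.isClosed.isOpen_compl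
    (eq_univ_of_forall fun w => (em (w ∈ F)).symm.imp id fun hwF hwG => hGF hwG hwF)
    ((ContinuousLinearMap.apply ℂ ℂ x).comp_analyticOnNhd hg).differentiableOn
    ((φ : X →L[ℂ] ℂ).comp_analyticOnNhd hf).differentiableOn
    (fun w ⟨hwF, hwG⟩ => by simp only [← hgφ w hwF, dualOp_sub_smul_apply, hfx w hwG])
  have hf_inf : Tendsto f (cocompact ℂ) (𝓝 0) :=
    tendsto_zero_of_apply_sub_smul_eq T (mem_of_superset hG.compl_mem_cocompact hfx)
  have hh_inf : Tendsto h (cocompact ℂ) (𝓝 0) := by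
    refine Tendsto.congr' ?_ (map_zero φ ▸ (φ.continuous.tendsto 0).comp hf_inf)
    filter_upwards [hG.compl_mem_cocompact] with w hwG using (hhG hwG).symm
  exact (hhF hz).symm.trans (hh.apply_eq_of_tendsto_cocompact z hh_inf)

lemma glocalSubspace_dualOp_eq_zero_of_dense {T : X →L[ℂ] X} {F G : Set ℂ} (hF : IsClosed F)
    (hFc : Fᶜ.Nonempty) (hG : IsCompact G) (hGF : G ⊆ Fᶜ) (hdense : Dense (glocalSubspace T G)) :
    glocalSubspace (dualOp T) F = {0} := by
  refine eq_singleton_iff_unique_mem.mpr ⟨⟨0, analyticOnNhd_const, fun z _ => by simp⟩, ?_⟩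
  rintro φ ⟨g, hg, hgφ⟩
  obtain ⟨z, hz⟩ := hFc
  have hgz : g z = 0 := ContinuousLinearMap.ext_on (hdense.mono Submodule.subset_span)
    fun x hx => apply_eq_zero_of_mem_glocalSubspace hF hG hGF hg hgφ hx hz
  simpa [hgz] using (hgφ z hz).symm

theorem adjoint_glocal_eq_zero_general {X : Type*} [NormedAddCommGroup X] [NormedSpace ℂ X]
    (T : X →L[ℂ] X)
    (hdense : ∀ U : Set ℂ, RelativelyOpenInSpectrum T U →
      Dense (glocalSubspace T (closure U)))
    (F : Set ℂ) (hF : IsClosed F) (hFs : F ⊂ spectrum ℂ (dualOp T)) :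
    glocalSubspace (dualOp T) F = {0} := by
  obtain ⟨l, hl, hlF⟩ := not_subset.mp hFs.2
  obtain ⟨ε, hε, hball⟩ :=
    Metric.nhds_basis_closedBall.mem_iff.mp (hF.isOpen_compl.mem_nhds hlF)
  set U := spectrum ℂ T ∩ Metric.ball l ε
  have hU : RelativelyOpenInSpectrum T U :=
    ⟨⟨l, spectrum_dualOp_subset T hl, Metric.mem_ball_self hε⟩, _, Metric.isOpen_ball, rfl⟩
  have hUε : closure U ⊆ Metric.closedBall l ε :=
    (closure_mono inter_subset_right).trans Metric.closure_ball_subset_closedBall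
  exact glocalSubspace_dualOp_eq_zero_of_dense hF ⟨l, hlF⟩
    ((isCompact_closedBall l ε).of_isClosed_subset isClosed_closure hUε) (hUε.trans hball)
    (hdense U hU)

/-- If every glocal spectral subspace of `T` associated to the closure of a nonempty
relatively open subset of `σ(T)` is dense, then `𝒳*_{T*}(F) = {0}` for every closed
proper subset `F` of `σ(T*)`. -/
theorem adjoint_glocal_eq_zero {X : Type*} [NormedAddCommGroup X] [NormedSpace ℂ X]
    [CompleteSpace X] (T : X →L[ℂ] X)
    (hdense : ∀ U : Set ℂ, RelativelyOpenInSpectrum T U →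
      Dense (glocalSubspace T (closure U)))
    (F : Set ℂ) (hF : IsClosed F) (hFs : F ⊂ spectrum ℂ (dualOp T)) :
    glocalSubspace (dualOp T) F = {0} :=
  adjoint_glocal_eq_zero_general T hdense F hF hFs

end
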